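/- Define F₁(H,σ) := (1 − H²)·(−(9/8)(σ² + H²) − (3/4)Hσ − (1/3)(1 − H²)), F₂(H,σ) := (9/8)σ² − (9/4)Hσ − (1/3)(1 − H²) − (15/8)H² − Hσ·(−(9/8)(σ² + H²) − (3/4)Hσ − (1/3)(1 − H²)), Z₂(H,σ) := (1/27)·(19H² + 8) − σ², and α₂(H,σ) := (19/12)H³ + (3/2)H²σ + (9/4)Hσ² − (19/12)H + (9/4)σ. Then for all real H, σ one has the polynomial identity (38/27)·H·F₁(H,σ) − 2σ·F₂(H,σ) = α₂(H,σ)·Z₂(H,σ). Consequently, along any solution of dH_N/dτ = F₁, dσ_N/dτ = F₂, the quantity Z₂(H_N,σ_N) satisfies dZ₂/dτ = α₂(H_N,σ_N)·Z₂(H_N,σ_N), so the sets {Z₂ = 0}, {Z₂ > 0}, {Z₂ < 0} are invariant; the set {Z₂ = 0} consists of the two curves σ = ±(1/(3√3))·√(19H² + 8) joining the saddle points to the source and sink. -/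

import Mathlib

/-!
Along the flow, `dZ₂/dτ = (38/27) H F₁ − 2σ F₂`, and this polynomial factors as `α₂ Z₂`. So
`Z₂` solves the scalar linear equation `z' = α₂ z`, whence `z(t) = z(t₀) exp ∫_{t₀}^t α₂`
and the sign of `Z₂` is constant along solutions. Finally `Z₂ = c² − σ²` with
`c = √(19H² + 8) / (3√3)`, so `Z₂ = 0` exactly on the two curves `σ = ±c`.
-/

/-- First component of the compactified expansion-normalised vector field. -/
noncomputable def F₁ (H σ : ℝ) : ℝ :=
  (1 - H ^ 2) * (-(9 / 8) * (σ ^ 2 + H ^ 2) - (3 / 4) * (H * σ) - (1 / 3) * (1 - H ^ 2))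

/-- Second component of the compactified expansion-normalised vector field. -/
noncomputable def F₂ (H σ : ℝ) : ℝ :=
  (9 / 8) * σ ^ 2 - (9 / 4) * (H * σ) - (1 / 3) * (1 - H ^ 2) - (15 / 8) * H ^ 2
    - H * σ * (-(9 / 8) * (σ ^ 2 + H ^ 2) - (3 / 4) * (H * σ) - (1 / 3) * (1 - H ^ 2))

/-- The quantity whose zero set contains the stable/unstable manifolds of the saddles. -/
noncomputable def Z₂ (H σ : ℝ) : ℝ := (1 / 27) * (19 * H ^ 2 + 8) - σ ^ 2

/-- The auxiliary factor `α₂`. -/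
noncomputable def α₂ (H σ : ℝ) : ℝ :=
  (19 / 12) * H ^ 3 + (3 / 2) * (H ^ 2 * σ) + (9 / 4) * (H * σ ^ 2)
    - (19 / 12) * H + (9 / 4) * σ

open Set Real

section LinearODE

variable {s : Set ℝ} {α g : ℝ → ℝ} {t₀ t : ℝ}

theorem hasDerivAt_integral_of_continuousOn (hs : IsOpen s) [s.OrdConnected]
    (hα : ContinuousOn α s) (ht₀ : t₀ ∈ s) (ht : t ∈ s) :
    HasDerivAt (fun x => ∫ u in t₀..x, α u) (α t) t :=
  intervalIntegral.integral_hasDerivAt_right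
    (hα.mono (OrdConnected.uIcc_subset ‹_› ht₀ ht)).intervalIntegrable
    (hα.stronglyMeasurableAtFilter hs t ht) (hα.continuousAt (hs.mem_nhds ht))

theorem eq_mul_exp_integral_of_hasDerivAt_mul (hs : IsOpen s) [s.OrdConnected]
    (hα : ContinuousOn α s) (hg : ∀ x ∈ s, HasDerivAt g (α x * g x) x)
    (ht₀ : t₀ ∈ s) (ht : t ∈ s) :
    g t = g t₀ * exp (∫ u in t₀..t, α u) := by
  set A : ℝ → ℝ := fun x => ∫ u in t₀..x, α u
  have hderiv : ∀ x ∈ s, HasDerivAt (fun y => g y * exp (-A y)) 0 x := fun x hx => by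
    have h : HasDerivAt (fun y => g y * exp (-A y))
        (α x * g x * exp (-A x) + g x * (exp (-A x) * -α x)) x :=
      (hg x hx).mul (hasDerivAt_integral_of_continuousOn hs hα ht₀ hx).neg.exp
    convert h using 1
    ring
  have hconst : g t * exp (-A t) = g t₀ * exp (-A t₀) :=
    hs.is_const_of_deriv_eq_zero ‹s.OrdConnected›.isPreconnected
      (fun x hx => (hderiv x hx).differentiableAt.differentiableWithinAt)
      (fun x hx => (hderiv x hx).deriv) ht ht₀
  have hA₀ : A t₀ = 0 := intervalIntegral.integral_same
  rw [hA₀, neg_zero, exp_zero, mul_one] at hconst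
  rw [← hconst, mul_assoc, ← exp_add, neg_add_cancel, exp_zero, mul_one]

end LinearODE

theorem F₁_F₂_combination_eq (H σ : ℝ) :
    (38 / 27) * H * F₁ H σ - 2 * σ * F₂ H σ = α₂ H σ * Z₂ H σ := by
  unfold F₁ F₂ α₂ Z₂
  ring

theorem HasDerivAt.Z₂_comp {H σ : ℝ → ℝ} {t : ℝ} (hH : HasDerivAt H (F₁ (H t) (σ t)) t)
    (hσ : HasDerivAt σ (F₂ (H t) (σ t)) t) :
    HasDerivAt (fun τ => Z₂ (H τ) (σ τ)) (α₂ (H t) (σ t) * Z₂ (H t) (σ t)) t := by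
  have h : HasDerivAt (fun τ => Z₂ (H τ) (σ τ))
      ((1 / 27) * (19 * (↑2 * H t ^ (2 - 1) * F₁ (H t) (σ t)))
        - ↑2 * σ t ^ (2 - 1) * F₂ (H t) (σ t)) t :=
    ((((hH.pow 2).const_mul 19).add_const 8).const_mul (1 / 27)).sub (hσ.pow 2)
  convert h using 1
  rw [← F₁_F₂_combination_eq]
  push_cast
  ring

theorem Z₂_eq_zero_iff (H σ : ℝ) :
    Z₂ H σ = 0 ↔
      σ = (1 / (3 * √3)) * √(19 * H ^ 2 + 8) ∨ σ = -((1 / (3 * √3)) * √(19 * H ^ 2 + 8)) := by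
  have hsq : ((1 / (3 * √3)) * √(19 * H ^ 2 + 8)) ^ 2 = (1 / 27) * (19 * H ^ 2 + 8) := by
    rw [mul_pow, div_pow, mul_pow, sq_sqrt (by norm_num), sq_sqrt (by positivity)]
    norm_num
  rw [← sq_eq_sq_iff_eq_or_eq_neg, hsq, Z₂, sub_eq_zero, eq_comm]

theorem saddle_manifolds_invariant :
    (∀ H σ : ℝ, (38 / 27) * H * F₁ H σ - 2 * σ * F₂ H σ = α₂ H σ * Z₂ H σ) ∧
    (∀ (a b : ℝ) (H σ : ℝ → ℝ),
      (∀ t ∈ Set.Ioo a b, HasDerivAt H (F₁ (H t) (σ t)) t) →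
      (∀ t ∈ Set.Ioo a b, HasDerivAt σ (F₂ (H t) (σ t)) t) →
      ((∀ t ∈ Set.Ioo a b, HasDerivAt (fun τ => Z₂ (H τ) (σ τ))
          (α₂ (H t) (σ t) * Z₂ (H t) (σ t)) t) ∧
       (∀ t₀ ∈ Set.Ioo a b,
          (Z₂ (H t₀) (σ t₀) = 0 → ∀ t ∈ Set.Ioo a b, Z₂ (H t) (σ t) = 0) ∧
          (0 < Z₂ (H t₀) (σ t₀) → ∀ t ∈ Set.Ioo a b, 0 < Z₂ (H t) (σ t)) ∧
          (Z₂ (H t₀) (σ t₀) < 0 → ∀ t ∈ Set.Ioo a b, Z₂ (H t) (σ t) < 0)))) ∧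
    (∀ H σ : ℝ, Z₂ H σ = 0 ↔
      σ = (1 / (3 * Real.sqrt 3)) * Real.sqrt (19 * H ^ 2 + 8) ∨
      σ = -((1 / (3 * Real.sqrt 3)) * Real.sqrt (19 * H ^ 2 + 8))) := by
  refine ⟨F₁_F₂_combination_eq, fun a b H σ hH hσ => ?_, Z₂_eq_zero_iff⟩
  have hZ : ∀ t ∈ Ioo a b, HasDerivAt (fun τ => Z₂ (H τ) (σ τ))
      (α₂ (H t) (σ t) * Z₂ (H t) (σ t)) t := fun t ht => (hH t ht).Z₂_comp (hσ t ht)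
  have hα : ContinuousOn (fun t => α₂ (H t) (σ t)) (Ioo a b) := fun t ht => by
    have hHc := (hH t ht).continuousAt
    have hσc := (hσ t ht).continuousAt
    unfold α₂
    exact ContinuousAt.continuousWithinAt (by fun_prop)
  refine ⟨hZ, fun t₀ ht₀ => ?_⟩
  have hsol : ∀ t ∈ Ioo a b, Z₂ (H t) (σ t) =
      Z₂ (H t₀) (σ t₀) * exp (∫ u in t₀..t, α₂ (H u) (σ u)) := fun t ht =>
    eq_mul_exp_integral_of_hasDerivAt_mul isOpen_Ioo hα hZ ht₀ ht
  refine ⟨fun h t ht => ?_, fun h t ht => ?_, fun h t ht => ?_⟩ <;> rw [hsol t ht]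
  · rw [h, zero_mul]
  · positivity
  · exact mul_neg_of_neg_of_pos h (exp_pos _)
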